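/- Let n ≥ 1 be an integer, p > 1, q > 1, D ∈ 𝓜ₙ, u ∈ ℝⁿ, and a = (p−1)/(2p−n(1−p)). Then ∫_{ℝⁿ} f_p(D,u,x)^q dx = (a/π)^{n(q−1)/2} · (Γ(p/(p−1)+n/2)/Γ(p/(p−1)))^q · Γ(q/(p−1)+1)/Γ(q/(p−1)+1+n/2) · (det D)^{(q−1)/2}. -/

import Mathlib

/-!
Write `a = (p - 1)/(2p - n(1 - p))` and `s = q/(p - 1)`, so that
`f_p(D,u,x)^q = (A_{n,p} √(det D))^q · (1 - ⟨x - u, a D (x - u)⟩)₊^s`.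
Translating by `u` and substituting `y = √(a D) x` reduces the integral to
`(det (a D))^{-1/2} ∫ (1 - |y|²)₊^s dy`. In polar coordinates, and with `t = r²`, the latter is
`|S^{n-1}|/2` times the Beta integral `B(n/2, s + 1)`, which gives `π^{n/2} Γ(s+1)/Γ(s+1+n/2)`.
-/

open MeasureTheory Matrix

/-- Normalization constant `A_{n,p}` for `p > 1`. -/
noncomputable def gaussA (n : ℕ) (p : ℝ) : ℝ :=
  ((p - 1) / (2 * p - n * (1 - p))) ^ ((n : ℝ) / 2) *
    Real.Gamma (p / (p - 1) + n / 2) /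
    (Real.pi ^ ((n : ℝ) / 2) * Real.Gamma (p / (p - 1)))

/-- The `p`-Gaussian density for `p > 1`. -/
noncomputable def gaussF (n : ℕ) (p : ℝ) (D : Matrix (Fin n) (Fin n) ℝ)
    (u x : Fin n → ℝ) : ℝ :=
  if 0 ≤ 1 - (p - 1) / (2 * p - n * (1 - p)) * ((x - u) ⬝ᵥ D.mulVec (x - u)) then
    gaussA n p * Real.sqrt D.det *
      (1 - (p - 1) / (2 * p - n * (1 - p)) * ((x - u) ⬝ᵥ D.mulVec (x - u))) ^ (1 / (p - 1))
  else 0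

open Real Set Module

theorem integral_rpow_mul_one_sub_rpow {a b : ℝ} (ha : 0 < a) (hb : 0 < b) :
    ∫ t in (0 : ℝ)..1, t ^ (a - 1) * (1 - t) ^ (b - 1) = Gamma a * Gamma b / Gamma (a + b) := by
  have hcast : ((∫ t in (0 : ℝ)..1, t ^ (a - 1) * (1 - t) ^ (b - 1) : ℝ) : ℂ) =
      Complex.betaIntegral a b := by
    rw [Complex.betaIntegral, ← intervalIntegral.integral_ofReal]
    refine intervalIntegral.integral_congr fun t ht => ?_
    rw [uIcc_of_le zero_le_one] at ht
    push_cast [Complex.ofReal_cpow ht.1, Complex.ofReal_cpow (sub_nonneg.2 ht.2)]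
    rfl
  apply Complex.ofReal_injective
  rw [hcast, Complex.betaIntegral_eq_Gamma_mul_div _ _ (by simpa) (by simpa), ← Complex.ofReal_add]
  simp only [Complex.Gamma_ofReal]
  norm_cast

theorem integral_Ioi_rpow_mul_max_one_sub_sq_rpow {r s : ℝ} (hr : 0 < r) (hs : 0 < s) :
    ∫ y in Ioi (0 : ℝ), y ^ (r - 1) * max 0 (1 - y ^ 2) ^ s =
      Gamma (r / 2) * Gamma (s + 1) / (2 * Gamma (r / 2 + (s + 1))) := by
  set g : ℝ → ℝ := fun t => 2⁻¹ * (t ^ (r / 2 - 1) * max 0 (1 - t) ^ s)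
  have hsubst :
      ∫ y in Ioi (0 : ℝ), y ^ (r - 1) * max 0 (1 - y ^ 2) ^ s = ∫ t in Ioi (0 : ℝ), g t := by
    rw [← integral_comp_rpow_Ioi g two_ne_zero]
    refine setIntegral_congr_fun measurableSet_Ioi fun y (hy : 0 < y) => ?_
    have hpow : (y ^ 2) ^ (r / 2 - 1) = y ^ (r - 2) := by
      rw [← rpow_two, ← rpow_mul hy.le]; ring_nf
    simp only [g, smul_eq_mul, rpow_two, abs_two, hpow]
    rw [show r - 1 = 1 + (r - 2) by ring, rpow_add hy]
    norm_num
    ring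
  have hsupp : ∫ t in Ioi (0 : ℝ), g t = ∫ t in Ioc (0 : ℝ) 1, g t := by
    refine setIntegral_eq_of_subset_of_forall_sdiff_eq_zero measurableSet_Ioi Ioc_subset_Ioi_self
      fun t ⟨(ht0 : 0 < t), ht1⟩ => ?_
    have : 1 < t := lt_of_not_ge fun h => ht1 ⟨ht0, h⟩
    simp [g, max_eq_left (by linarith : 1 - t ≤ 0), zero_rpow hs.ne']
  have hbeta : ∫ t in (0 : ℝ)..1, g t =
      2⁻¹ * ∫ t in (0 : ℝ)..1, t ^ (r / 2 - 1) * (1 - t) ^ (s + 1 - 1) := by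
    rw [← intervalIntegral.integral_const_mul]
    refine intervalIntegral.integral_congr fun t ht => ?_
    rw [uIcc_of_le zero_le_one] at ht
    simp [g, max_eq_right (sub_nonneg.2 ht.2)]
  rw [hsubst, hsupp, ← intervalIntegral.integral_of_le zero_le_one, hbeta,
    integral_rpow_mul_one_sub_rpow (by positivity) (by linarith)]
  ring

theorem InnerProductSpace.integral_max_one_sub_norm_sq_rpow {E : Type*} [NormedAddCommGroup E]
    [InnerProductSpace ℝ E] [FiniteDimensional ℝ E] [MeasurableSpace E] [BorelSpace E]
    [Nontrivial E] {s : ℝ} (hs : 0 < s) :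
    ∫ x : E, max 0 (1 - ‖x‖ ^ 2) ^ s =
      π ^ ((finrank ℝ E : ℝ) / 2) * Gamma (s + 1) / Gamma (s + 1 + finrank ℝ E / 2) := by
  have hn : 0 < finrank ℝ E := finrank_pos
  have hball : volume.real (Metric.ball (0 : E) 1) =
      π ^ ((finrank ℝ E : ℝ) / 2) / Gamma (finrank ℝ E / 2 + 1) := by
    rw [measureReal_def, InnerProductSpace.volume_ball, ENNReal.ofReal_one, one_pow, one_mul,
      ENNReal.toReal_ofReal (by positivity), sqrt_eq_rpow, ← rpow_natCast, ← rpow_mul pi_pos.le]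
    ring_nf
  have hradial : ∫ y in Ioi (0 : ℝ), y ^ (finrank ℝ E - 1) • max 0 (1 - y ^ 2) ^ s =
      ∫ y in Ioi (0 : ℝ), y ^ ((finrank ℝ E : ℝ) - 1) * max 0 (1 - y ^ 2) ^ s := by
    refine setIntegral_congr_fun measurableSet_Ioi fun y (hy : 0 < y) => ?_
    rw [smul_eq_mul, ← rpow_natCast, Nat.cast_sub hn, Nat.cast_one]
  rw [integral_fun_norm_addHaar volume (fun r => max 0 (1 - r ^ 2) ^ s), hball, hradial,
    integral_Ioi_rpow_mul_max_one_sub_sq_rpow (by positivity) hs,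
    Gamma_add_one (by positivity : (finrank ℝ E : ℝ) / 2 ≠ 0)]
  have := Gamma_pos_of_pos (by positivity : 0 < (finrank ℝ E : ℝ) / 2)
  have := Gamma_pos_of_pos (by positivity : 0 < (finrank ℝ E : ℝ) / 2 + (s + 1))
  rw [nsmul_eq_mul, smul_eq_mul, add_comm (s + 1)]
  field_simp

theorem integral_max_one_sub_dotProduct_self_rpow {ι : Type*} [Fintype ι] {s : ℝ} (hs : 0 < s) :
    ∫ y : ι → ℝ, max 0 (1 - y ⬝ᵥ y) ^ s =
      π ^ ((Fintype.card ι : ℝ) / 2) * Gamma (s + 1) / Gamma (s + 1 + Fintype.card ι / 2) := by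
  rcases isEmpty_or_nonempty ι with hι | hι
  · rw [Measure.volume_pi_eq_dirac 0, integral_dirac]
    simp [(Gamma_pos_of_pos (by linarith : 0 < s + 1)).ne']
  · rw [← (PiLp.volume_preserving_ofLp ι).integral_comp
      (MeasurableEquiv.toLp 2 (ι → ℝ)).symm.measurableEmbedding]
    have hnorm (z : EuclideanSpace ℝ ι) : z.ofLp ⬝ᵥ z.ofLp = ‖z‖ ^ 2 := by
      rw [← real_inner_self_eq_norm_sq, EuclideanSpace.inner_eq_star_dotProduct, star_trivial]
    simp only [hnorm]
    rw [InnerProductSpace.integral_max_one_sub_norm_sq_rpow hs, finrank_euclideanSpace]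

open scoped MatrixOrder in
theorem Matrix.PosDef.integral_comp_dotProduct_mulVec {ι F : Type*} [Fintype ι] [DecidableEq ι]
    [NormedAddCommGroup F] [NormedSpace ℝ F] {D : Matrix ι ι ℝ} (hD : D.PosDef) (f : ℝ → F) :
    ∫ x : ι → ℝ, f (x ⬝ᵥ D *ᵥ x) = (√D.det)⁻¹ • ∫ y : ι → ℝ, f (y ⬝ᵥ y) := by
  set S := CFC.sqrt D
  have hSS : S * S = D := CFC.sqrt_mul_sqrt_self D hD.posSemidef.nonneg
  have hSt : Sᵀ = S := by
    rw [← conjTranspose_eq_transpose_of_trivial]; exact (CFC.sqrt_nonneg D).posSemidef.1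
  have hdetS : S.det = √D.det := by
    rw [hD.posSemidef.det_sqrt, RCLike.sqrt_of_nonneg hD.posSemidef.det_nonneg]; rfl
  have hquad (x : ι → ℝ) : x ⬝ᵥ D *ᵥ x = S *ᵥ x ⬝ᵥ S *ᵥ x := by
    rw [← hSS, ← mulVec_mulVec, dotProduct_mulVec, ← mulVec_transpose, hSt]
  have hdet : LinearMap.det (toLin' S) ≠ 0 := by
    rw [LinearMap.det_toLin', hdetS]; exact (Real.sqrt_pos.2 hD.det_pos).ne'
  have hT : MeasurableEmbedding (toLin' S) :=
    ((toLin' S).equivOfDetNeZero hdet).toContinuousLinearEquiv.toHomeomorph.measurableEmbedding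
  calc ∫ x : ι → ℝ, f (x ⬝ᵥ D *ᵥ x) = ∫ x : ι → ℝ, f (toLin' S x ⬝ᵥ toLin' S x) := by
        simp only [hquad, toLin'_apply]
    _ = ∫ y, f (y ⬝ᵥ y) ∂(Measure.map (toLin' S) volume) :=
        (hT.integral_map fun y => f (y ⬝ᵥ y)).symm
    _ = (√D.det)⁻¹ • ∫ y : ι → ℝ, f (y ⬝ᵥ y) := by
      rw [Measure.map_linearMap_addHaar_pi_eq_smul_addHaar hdet, integral_smul_measure,
        LinearMap.det_toLin', hdetS, abs_inv, abs_of_nonneg (Real.sqrt_nonneg _),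
        ENNReal.toReal_ofReal (inv_nonneg.2 (Real.sqrt_nonneg _))]

theorem Matrix.PosDef.integral_max_one_sub_dotProduct_mulVec_sub_rpow {ι : Type*} [Fintype ι]
    [DecidableEq ι] {D : Matrix ι ι ℝ} (hD : D.PosDef) (u : ι → ℝ) {s : ℝ} (hs : 0 < s) :
    ∫ x : ι → ℝ, max 0 (1 - (x - u) ⬝ᵥ D *ᵥ (x - u)) ^ s =
      (√D.det)⁻¹ * (π ^ ((Fintype.card ι : ℝ) / 2) * Gamma (s + 1) /
        Gamma (s + 1 + Fintype.card ι / 2)) := by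
  rw [integral_sub_right_eq_self (fun x => max 0 (1 - x ⬝ᵥ D *ᵥ x) ^ s),
    hD.integral_comp_dotProduct_mulVec fun t => max 0 (1 - t) ^ s,
    integral_max_one_sub_dotProduct_self_rpow hs, smul_eq_mul]

noncomputable def gaussScale (n : ℕ) (p : ℝ) : ℝ := (p - 1) / (2 * p - n * (1 - p))

theorem gaussScale_pos {n : ℕ} {p : ℝ} (hp : 1 < p) : 0 < gaussScale n p :=
  div_pos (by linarith) (by nlinarith)

theorem gaussA_eq {n : ℕ} {p : ℝ} (hp : 1 < p) :
    gaussA n p = (gaussScale n p / π) ^ ((n : ℝ) / 2) *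
      (Gamma (p / (p - 1) + n / 2) / Gamma (p / (p - 1))) := by
  rw [div_rpow (gaussScale_pos hp).le pi_pos.le, gaussA, gaussScale]
  ring

theorem gaussA_pos {n : ℕ} {p : ℝ} (hp : 1 < p) : 0 < gaussA n p := by
  have hc : 0 < p / (p - 1) := div_pos (by linarith) (by linarith)
  have := gaussScale_pos (n := n) hp
  have := Gamma_pos_of_pos hc
  have := Gamma_pos_of_pos (by positivity : 0 < p / (p - 1) + n / 2)
  rw [gaussA_eq hp]
  positivity

theorem gaussF_rpow_eq {n : ℕ} {p q : ℝ} (hp : 1 < p) (hq : 0 < q)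
    (D : Matrix (Fin n) (Fin n) ℝ) (u x : Fin n → ℝ) :
    gaussF n p D u x ^ q = (gaussA n p * √D.det) ^ q *
      max 0 (1 - (x - u) ⬝ᵥ (gaussScale n p • D) *ᵥ (x - u)) ^ (q / (p - 1)) := by
  rw [gaussF, smul_mulVec, dotProduct_smul, smul_eq_mul, ← gaussScale]
  split_ifs with h
  · rw [max_eq_right h, mul_rpow (by positivity [gaussA_pos (n := n) hp]) (rpow_nonneg h _),
      ← rpow_mul h, one_div_mul_eq_div]
  · rw [max_eq_left (by linarith), zero_rpow hq.ne', zero_rpow (div_pos hq (by linarith)).ne',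
      mul_zero]

theorem gaussA_mul_sqrt_rpow_div_sqrt {n : ℕ} {p d : ℝ} (hp : 1 < p) (hd : 0 < d) (q : ℝ) :
    (gaussA n p * √d) ^ q / √(gaussScale n p ^ n * d) * π ^ ((n : ℝ) / 2) =
      (gaussScale n p / π) ^ ((n : ℝ) * (q - 1) / 2) *
        (Gamma (p / (p - 1) + n / 2) / Gamma (p / (p - 1))) ^ q * d ^ ((q - 1) / 2) := by
  rw [gaussA_eq hp]
  set c := gaussScale n p
  set G := Gamma (p / (p - 1) + n / 2) / Gamma (p / (p - 1))
  have hc : 0 < c := gaussScale_pos hp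
  have hG : 0 < G := by
    have : 0 < p / (p - 1) := div_pos (by linarith) (by linarith)
    exact div_pos (Gamma_pos_of_pos (by positivity)) (Gamma_pos_of_pos this)
  have hsqrt : √(c ^ n * d) = (c / π) ^ ((n : ℝ) / 2) * π ^ ((n : ℝ) / 2) * √d := by
    rw [sqrt_mul (by positivity), div_rpow hc.le pi_pos.le, sqrt_eq_rpow, ← rpow_natCast,
      ← rpow_mul hc.le]
    field_simp
  rw [show (n : ℝ) * (q - 1) / 2 = n / 2 * (q - 1) by ring, rpow_mul (by positivity),
    rpow_sub_one (by positivity), show (q - 1) / 2 = 1 / 2 * (q - 1) by ring, rpow_mul hd.le,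
    ← sqrt_eq_rpow, rpow_sub_one (by positivity), hsqrt,
    mul_rpow (by positivity) (sqrt_nonneg _), mul_rpow (by positivity) hG.le]
  field_simp

theorem integral_gaussF_rpow_general (n : ℕ) (p q : ℝ) (hp : 1 < p) (hq : 1 < q)
    (D : Matrix (Fin n) (Fin n) ℝ) (hD : D.PosDef) (u : Fin n → ℝ) :
    ∫ x : Fin n → ℝ, gaussF n p D u x ^ q =
      ((p - 1) / (2 * p - n * (1 - p)) / Real.pi) ^ ((n : ℝ) * (q - 1) / 2) *
        (Real.Gamma (p / (p - 1) + n / 2) / Real.Gamma (p / (p - 1))) ^ q *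
        (Real.Gamma (q / (p - 1) + 1) / Real.Gamma (q / (p - 1) + 1 + n / 2)) *
        D.det ^ ((q - 1) / 2) := by
  have hs : 0 < q / (p - 1) := div_pos (by linarith) (by linarith)
  calc ∫ x : Fin n → ℝ, gaussF n p D u x ^ q
      = (gaussA n p * √D.det) ^ q *
          ∫ x : Fin n → ℝ,
            max 0 (1 - (x - u) ⬝ᵥ (gaussScale n p • D) *ᵥ (x - u)) ^ (q / (p - 1)) := by
        simp only [gaussF_rpow_eq hp (by linarith : 0 < q)]
        exact integral_const_mul _ _
    _ = (gaussA n p * √D.det) ^ q / √(gaussScale n p ^ n * D.det) * π ^ ((n : ℝ) / 2) *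
          (Gamma (q / (p - 1) + 1) / Gamma (q / (p - 1) + 1 + n / 2)) := by
        rw [(hD.smul (gaussScale_pos hp)).integral_max_one_sub_dotProduct_mulVec_sub_rpow u hs,
          det_smul, Fintype.card_fin]
        ring
    _ = _ := by
      rw [gaussA_mul_sqrt_rpow_div_sqrt hp hD.det_pos, gaussScale]
      ring

/-- the integral of `f_p(D,u,·)^q` for `p > 1`, `q > 1`,
with `a = (p−1)/(2p−n(1−p))`. -/
theorem integral_gaussF_rpow (n : ℕ) (hn : 1 ≤ n) (p q : ℝ) (hp : 1 < p) (hq : 1 < q)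
    (D : Matrix (Fin n) (Fin n) ℝ) (hD : D.PosDef) (u : Fin n → ℝ) :
    ∫ x : Fin n → ℝ, gaussF n p D u x ^ q =
      ((p - 1) / (2 * p - n * (1 - p)) / Real.pi) ^ ((n : ℝ) * (q - 1) / 2) *
        (Real.Gamma (p / (p - 1) + n / 2) / Real.Gamma (p / (p - 1))) ^ q *
        (Real.Gamma (q / (p - 1) + 1) / Real.Gamma (q / (p - 1) + 1 + n / 2)) *
        D.det ^ ((q - 1) / 2) :=
  integral_gaussF_rpow_general n p q hp hq D hD u
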